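/- For every positive integer n and every complex number x: ∑_{k=1}^{n} binom(n, k) · (H_k^2 + H_k^{(2)}) · x^k = (1+x)^n · (H_n^2 + H_n^{(2)}) + 2 · ∑_{k=1}^{n} ((H_{k-1} − H_n)/k) · (1+x)^{n−k} − (H_n^2 + H_n^{(2)}) − 2 · ∑_{k=1}^{n} ((H_{k-1} − H_n)/k) evaluated so that the k = 0 term of the left-hand sum is excluded; equivalently, ∑_{k=0}^{n} binom(n, k) · (H_k^2 + H_k^{(2)}) · x^k = (1+x)^n · (H_n^2 + H_n^{(2)}) + 2 · ∑_{k=1}^{n} ((H_{k-1} − H_n)/k) · (1+x)^{n−k}. (This is the denominator-cleared form of the paper's identity ∑_{k=1}^{n} binom(n,k)(H_k^2 + H_k^{(2)}) x^k = (1+x)^n [H_n^2 + H_n^{(2)} + 2 ∑_{k=1}^{n} (H_{k-1} − H_n)/(k (1+x)^k)].) -/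

import Mathlib

/-! Write `B_m(a) = ∑ₖ C(m,k) aₖ xᵏ`. Pascal's rule gives `B_{m+1}(a) = (1+x) B_m(a) + x B_m(Δa)`,
and when `Δaₖ = b_{k+1}/(k+1)` the identity `C(m,k)/(k+1) = C(m+1,k+1)/(m+1)` turns the second
term into `(B_{m+1}(b) - b₀)/(m+1)`. Since `ΔHₖ = 1/(k+1)` and
`Δ(Hₖ² + Hₖ⁽²⁾) = 2H_{k+1}/(k+1)`, this expresses the sum for `H` through `(1+x)^{m+1}` and the
sum for `H² + H⁽²⁾` through the sum for `H`; both closed forms then follow by induction on `m`. -/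

open Finset

/-- Generalized binomial coefficient `C(s,k) = s(s-1)⋯(s-k+1)/k!` for complex `s`. -/
noncomputable def genChoose (s : ℂ) (k : ℕ) : ℂ :=
  (∏ i ∈ Finset.range k, (s - i)) / (Nat.factorial k)

/-- The `n`-th harmonic number as a complex number. -/
noncomputable def Hc (n : ℕ) : ℂ := ∑ i ∈ Finset.range n, 1 / (i + 1)

/-- The `n`-th generalized harmonic number of order 2 as a complex number. -/
noncomputable def H2c (n : ℕ) : ℂ := ∑ i ∈ Finset.range n, 1 / ((i : ℂ) + 1) ^ 2

section BinomialSum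

variable {R : Type*} [CommRing R]

def binomialSum (a : ℕ → R) (x : R) (m : ℕ) : R :=
  ∑ k ∈ range (m + 1), (m.choose k : R) * a k * x ^ k

theorem binomialSum_const_mul (c : R) (a : ℕ → R) (x : R) (m : ℕ) :
    binomialSum (fun k => c * a k) x m = c * binomialSum a x m := by
  simp only [binomialSum, mul_sum]
  exact sum_congr rfl fun k _ => by ring

theorem binomialSum_one (x : R) (m : ℕ) : binomialSum (fun _ => 1) x m = (1 + x) ^ m := by
  rw [binomialSum, add_comm 1 x, add_pow]
  exact sum_congr rfl fun k _ => by ring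

theorem binomialSum_succ (a : ℕ → R) (x : R) (m : ℕ) :
    binomialSum a x (m + 1) =
      (1 + x) * binomialSum a x m + x * binomialSum (fun k => a (k + 1) - a k) x m := by
  have pascal := sum_choose_succ_mul (fun k _ => a k * x ^ k) m
  simp only [← mul_assoc] at pascal
  rw [binomialSum, pascal, binomialSum, binomialSum, mul_sum, mul_sum, ← sum_add_distrib,
    ← sum_add_distrib]
  exact sum_congr rfl fun k _ => by ring

end BinomialSum

section Field

variable {K : Type*} [Field K] [CharZero K]

theorem choose_div_succ (m k : ℕ) :
    (m.choose k : K) / (k + 1) = ((m + 1).choose (k + 1) : K) / (m + 1) := by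
  rw [div_eq_div_iff (Nat.cast_add_one_ne_zero k) (Nat.cast_add_one_ne_zero m), mul_comm]
  exact_mod_cast Nat.add_one_mul_choose_eq m k

theorem binomialSum_succ_of_sub_eq_div (a b : ℕ → K)
    (h : ∀ k, a (k + 1) - a k = b (k + 1) / (k + 1)) (x : K) (m : ℕ) :
    binomialSum a x (m + 1) =
      (1 + x) * binomialSum a x m + (binomialSum b x (m + 1) - b 0) / (m + 1) := by
  rw [binomialSum_succ]
  congr 1
  simp only [binomialSum, h]
  rw [sum_range_succ' _ (m + 1), mul_sum]
  simp only [Nat.choose_zero_right, Nat.cast_one, pow_zero, one_mul, mul_one,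
    add_sub_cancel_right, sum_div]
  refine sum_congr rfl fun k _ => ?_
  rw [pow_succ]
  linear_combination b (k + 1) * x ^ (k + 1) * choose_div_succ (K := K) m k

end Field

theorem sum_range_succ_mul_pow_sub {R : Type*} [CommSemiring R] (g : ℕ → R) (y : R) (m : ℕ) :
    ∑ j ∈ range (m + 1), g j * y ^ (m + 1 - (j + 1)) =
      y * ∑ j ∈ range m, g j * y ^ (m - (j + 1)) + g m := by
  rw [sum_range_succ, Nat.sub_self, pow_zero, mul_one, mul_sum]
  congr 1
  refine sum_congr rfl fun j hj => ?_
  rw [Nat.sub_add_comm (mem_range.mp hj), pow_succ]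
  ring

theorem Hc_succ (k : ℕ) : Hc (k + 1) = Hc k + 1 / (k + 1) := sum_range_succ _ _

theorem H2c_succ (k : ℕ) : H2c (k + 1) = H2c k + 1 / ((k : ℂ) + 1) ^ 2 := sum_range_succ _ _

theorem sq_Hc_add_H2c_succ (k : ℕ) :
    Hc (k + 1) ^ 2 + H2c (k + 1) = Hc k ^ 2 + H2c k + 2 * Hc (k + 1) / (k + 1) := by
  rw [Hc_succ, H2c_succ]
  have := Nat.cast_add_one_ne_zero (R := ℂ) k
  field_simp
  ring

theorem binomialSum_Hc (x : ℂ) (m : ℕ) :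
    binomialSum Hc x m =
      (1 + x) ^ m * Hc m - ∑ j ∈ range m, 1 / ((j : ℂ) + 1) * (1 + x) ^ (m - (j + 1)) := by
  induction m with
  | zero => simp [binomialSum, Hc]
  | succ m ih =>
    rw [binomialSum_succ_of_sub_eq_div Hc (fun _ => 1) (fun k => by rw [Hc_succ]; ring),
      binomialSum_one, ih, sum_range_succ_mul_pow_sub, Hc_succ]
    have := Nat.cast_add_one_ne_zero (R := ℂ) m
    field_simp
    ring

theorem sum_Hc_sub_succ (y : ℂ) (m : ℕ) :
    ∑ j ∈ range (m + 1), (Hc j - Hc (m + 1)) / (j + 1) * y ^ (m + 1 - (j + 1)) =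
      y * ∑ j ∈ range m, (Hc j - Hc m) / (j + 1) * y ^ (m - (j + 1)) -
        (∑ j ∈ range (m + 1), 1 / ((j : ℂ) + 1) * y ^ (m + 1 - (j + 1))) / (m + 1) := by
  have summand_eq : ∀ j ∈ range (m + 1), (Hc j - Hc (m + 1)) / (j + 1) * y ^ (m + 1 - (j + 1)) =
      (Hc j - Hc m) / (j + 1) * y ^ (m + 1 - (j + 1)) -
        1 / ((j : ℂ) + 1) * y ^ (m + 1 - (j + 1)) / (m + 1) := by
    intro j _
    rw [Hc_succ]
    ring
  rw [sum_congr rfl summand_eq, sum_sub_distrib, sum_range_succ_mul_pow_sub, sum_div]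
  simp

theorem binomialSum_sq_Hc_add_H2c (x : ℂ) (m : ℕ) :
    binomialSum (fun k => Hc k ^ 2 + H2c k) x m =
      (1 + x) ^ m * (Hc m ^ 2 + H2c m) +
        2 * ∑ j ∈ range m, (Hc j - Hc m) / (j + 1) * (1 + x) ^ (m - (j + 1)) := by
  induction m with
  | zero => simp [binomialSum, Hc, H2c]
  | succ m ih =>
    rw [binomialSum_succ_of_sub_eq_div _ (fun k => 2 * Hc k)
        (fun k => by rw [sq_Hc_add_H2c_succ]; ring), binomialSum_const_mul, ih, binomialSum_Hc,
      sum_Hc_sub_succ, sq_Hc_add_H2c_succ, show Hc 0 = 0 from sum_range_zero _]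
    ring

theorem sum_Icc_one_eq_sum_range {M : Type*} [AddCommMonoid M] (f : ℕ → M) (n : ℕ) :
    ∑ k ∈ Icc 1 n, f k = ∑ j ∈ range n, f (j + 1) := by
  rw [range_eq_Ico, sum_Ico_add', zero_add, Ico_add_one_right_eq_Icc]

theorem stmt_15_general (n : ℕ) (x : ℂ) :
    ∑ k ∈ Finset.range (n + 1), (Nat.choose n k : ℂ) * (Hc k ^ 2 + H2c k) * x ^ k =
      (1 + x) ^ n * (Hc n ^ 2 + H2c n) +
        2 * ∑ k ∈ Finset.Icc 1 n, (Hc (k - 1) - Hc n) / k * (1 + x) ^ (n - k) := by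
  rw [sum_Icc_one_eq_sum_range]
  simp only [Nat.add_sub_cancel, Nat.cast_add_one]
  exact binomialSum_sq_Hc_add_H2c x n

theorem stmt_15 (n : ℕ) (hn : 0 < n) (x : ℂ) :
    ∑ k ∈ Finset.range (n + 1), (Nat.choose n k : ℂ) * (Hc k ^ 2 + H2c k) * x ^ k =
      (1 + x) ^ n * (Hc n ^ 2 + H2c n) +
        2 * ∑ k ∈ Finset.Icc 1 n, (Hc (k - 1) - Hc n) / k * (1 + x) ^ (n - k) :=
  stmt_15_general n x
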